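/- arXiv:1111.0931 — 2 statements merged into one kernel-verified Lean document; each statement's English description precedes it below -/
import Mathlib

section
/- For coprime positive integers h, k with k ≥ 2, the Vasyunin sum V(h/k) = ∑_{m=1}^{k-1} {mh/k}·cot(πm/k) equals -c₀(h̄/k), where h̄ is the inverse of h modulo k, {x} denotes the fractional part, and c₀(h/k) = -∑_{m=1}^{k-1} (m/k)·cot(πmh/k). -/
open Finset Real

lemma cot_per : Function.Periodic Real.cot Real.pi := by
  intro x
  simp [Real.cot_eq_cos_div_sin, Real.cos_add_pi, Real.sin_add_pi, neg_div_neg_eq]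

lemma cot_nat_mod (k : ℕ) (hk : 0 < k) (a b : ℕ) (hab : a % k = b % k) :
    Real.cot (Real.pi * a / k) = Real.cot (Real.pi * b / k) := by
  have key : ∀ c : ℕ, Real.cot (Real.pi * c / k)
      = Real.cot (Real.pi * ((c % k : ℕ) : ℝ) / k) := by
    intro c
    have hk' : (k : ℝ) ≠ 0 := Nat.cast_ne_zero.mpr hk.ne'
    have h2 : (c : ℝ) = ((c % k : ℕ) : ℝ) + (k : ℝ) * ((c / k : ℕ) : ℝ) := by
      exact_mod_cast (Nat.mod_add_div c k).symm
    have e : Real.pi * c / k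
        = Real.pi * ((c % k : ℕ) : ℝ) / k + ((c / k : ℕ) : ℝ) * Real.pi := by
      rw [h2]; field_simp
    rw [e, (cot_per.nat_mul (c / k)) (Real.pi * ((c % k : ℕ) : ℝ) / k)]
  rw [key a, key b, hab]

lemma mod_step (k h hbar m : ℕ) (h1 : h * hbar % k = 1 % k) :
    (m * h % k) * hbar % k = m % k := by
  rw [Nat.mod_mul_mod, mul_assoc, Nat.mul_mod, h1, ← Nat.mul_mod, Nat.mul_one]

/-- The Vasyunin sum `V(h/k) = ∑_{m=1}^{k-1} {mh/k} cot(πm/k)` equals `-c₀(h̄/k)`,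
where `h̄` is the inverse of `h` mod `k` and
`c₀(a/k) = -∑_{m=1}^{k-1} (m/k) cot(πma/k)`. -/
theorem vasyunin_sum_eq (h k hbar : ℕ) (hh : 0 < h) (hk : 2 ≤ k)
    (hcop : Nat.Coprime h k) (hinv : (h * hbar) % k = 1 % k) :
    ∑ m ∈ Finset.Ico 1 k, Int.fract ((m : ℝ) * h / k) * Real.cot (Real.pi * m / k) =
    -(-∑ m ∈ Finset.Ico 1 k, ((m : ℝ) / k) * Real.cot (Real.pi * m * hbar / k)) := by
  rw [neg_neg]
  have hk0 : 0 < k := by omega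
  have h1k : 1 % k = 1 := Nat.one_mod_eq_one.mpr (by omega)
  have hbcop : Nat.Coprime hbar k :=
    Nat.coprime_of_mul_modEq_one h (by rwa [mul_comm h hbar] at hinv)
  have hinv' : hbar * h % k = 1 % k := by rwa [mul_comm hbar h]
  refine Finset.sum_nbij' (fun m => m * h % k) (fun n => n * hbar % k) ?_ ?_ ?_ ?_ ?_
  · intro m hm
    simp only [Finset.mem_Ico] at hm ⊢
    refine ⟨?_, Nat.mod_lt _ hk0⟩
    rcases Nat.eq_zero_or_pos (m * h % k) with h0 | h0
    · exfalso
      have hdvd : k ∣ m * h := Nat.dvd_of_mod_eq_zero h0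
      have : k ∣ m := (Nat.Coprime.dvd_of_dvd_mul_right (hcop.symm)) hdvd
      have := Nat.le_of_dvd (by omega) this
      omega
    · omega
  · intro m hm
    simp only [Finset.mem_Ico] at hm ⊢
    refine ⟨?_, Nat.mod_lt _ hk0⟩
    rcases Nat.eq_zero_or_pos (m * hbar % k) with h0 | h0
    · exfalso
      have hdvd : k ∣ m * hbar := Nat.dvd_of_mod_eq_zero h0
      have : k ∣ m := (Nat.Coprime.dvd_of_dvd_mul_right (hbcop.symm)) hdvd
      have := Nat.le_of_dvd (by omega) this
      omega
    · omega
  · intro m hm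
    simp only [Finset.mem_Ico] at hm
    show m * h % k * hbar % k = m
    rw [mod_step k h hbar m hinv, Nat.mod_eq_of_lt hm.2]
  · intro m hm
    simp only [Finset.mem_Ico] at hm
    show m * hbar % k * h % k = m
    rw [mod_step k hbar h m hinv', Nat.mod_eq_of_lt hm.2]
  · intro m hm
    simp only [Finset.mem_Ico] at hm
    have hfr : Int.fract ((m : ℝ) * h / k) = ((m * h % k : ℕ) : ℝ) / k := by
      rw [← Nat.cast_mul]
      exact Int.fract_div_natCast_eq_div_natCast_mod
    rw [hfr]
    congr 1
    have e : Real.pi * ((m * h % k : ℕ) : ℝ) * hbar / k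
        = Real.pi * (((m * h % k) * hbar : ℕ) : ℝ) / k := by push_cast; ring
    rw [e]
    exact cot_nat_mod k hk0 m ((m * h % k) * hbar) (mod_step k h hbar m hinv).symm
end

section
/- The asymptotic limit used in the Vasyunin formula proof: lim_{s→1} Γ(1-s-a)·Γ(1-s)·(cos(π(2s+a)/2) + cos(πa/2)) = -π·Γ(-a)·sin(πa/2), for complex a not a nonnegative integer. -/
open Complex Filter Topology
open scoped Real

/-! Near `s = 1`, `Γ(1 - s)` has a simple pole with residue `-1`, while the cosine factor has a
simple zero with derivative `π sin(πa/2)`; their product therefore tends to `-π sin(πa/2)`.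
The remaining factor `Γ(1 - s - a)` is continuous at `s = 1`, since `-a` is not a pole of `Γ`. -/

theorem tendsto_mul_of_residue_of_hasDerivAt {𝕜 : Type*} [NontriviallyNormedField 𝕜]
    {f g : 𝕜 → 𝕜} {x r d : 𝕜}
    (hg : Tendsto (fun s => (s - x) * g s) (𝓝[≠] x) (𝓝 r))
    (hfx : f x = 0) (hf : HasDerivAt f d x) :
    Tendsto (fun s => g s * f s) (𝓝[≠] x) (𝓝 (r * d)) := by
  refine (hg.mul (hasDerivAt_iff_tendsto_slope.mp hf)).congr' ?_
  filter_upwards [self_mem_nhdsWithin] with s hs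
  have hsx : s - x ≠ 0 := sub_ne_zero.mpr hs
  rw [slope_def_field, hfx, sub_zero]
  field_simp

theorem tendsto_sub_one_mul_Gamma_one_sub :
    Tendsto (fun s : ℂ => (s - 1) * Gamma (1 - s)) (𝓝[≠] 1) (𝓝 (-1)) := by
  have h_map : Tendsto (fun s : ℂ => 1 - s) (𝓝[≠] 1) (𝓝[≠] 0) := by
    refine tendsto_nhdsWithin_of_tendsto_nhds_of_eventually_within _ ?_ ?_
    · have h_cont := (show Continuous fun s : ℂ => 1 - s by fun_prop).tendsto 1
      rw [sub_self] at h_cont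
      exact h_cont.mono_left nhdsWithin_le_nhds
    · filter_upwards [self_mem_nhdsWithin] with s hs
      exact sub_ne_zero.mpr (Ne.symm hs)
  refine (tendsto_self_mul_Gamma_nhds_zero.comp h_map).neg.congr fun s => ?_
  simp only [Function.comp_apply]
  ring

theorem cos_pi_two_mul_add_div_two_add_cos_eq_zero (a : ℂ) :
    cos (π * (2 * 1 + a) / 2) + cos (π * a / 2) = 0 := by
  rw [show (π : ℂ) * (2 * 1 + a) / 2 = π * a / 2 + π by ring, cos_add_pi]
  exact neg_add_cancel _

theorem hasDerivAt_cos_pi_two_mul_add_div_two_add_cos (a : ℂ) :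
    HasDerivAt (fun s : ℂ => cos (π * (2 * s + a) / 2) + cos (π * a / 2))
      (π * sin (π * a / 2)) 1 := by
  have h_arg : HasDerivAt (fun s : ℂ => π * (2 * s + a) / 2) π 1 := by
    simpa using
      ((((hasDerivAt_id (1 : ℂ)).const_mul 2).add_const a).const_mul (π : ℂ)).div_const 2
  refine (h_arg.ccos.add_const (cos (π * a / 2))).congr_deriv ?_
  rw [show (π : ℂ) * (2 * 1 + a) / 2 = π * a / 2 + π by ring, sin_add_pi]
  ring

/-- For `a ∈ ℂ` not a nonnegative integer,
`lim_{s→1} Γ(1-s-a) Γ(1-s) (cos(π(2s+a)/2) + cos(πa/2)) = -π Γ(-a) sin(πa/2)`. -/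
theorem gamma_cos_limit (a : ℂ) (ha : ∀ n : ℕ, a ≠ n) :
    Tendsto (fun s : ℂ => Complex.Gamma (1 - s - a) * Complex.Gamma (1 - s) *
        (Complex.cos (Real.pi * (2 * s + a) / 2) + Complex.cos (Real.pi * a / 2)))
      (nhdsWithin 1 {(1 : ℂ)}ᶜ)
      (nhds (-Real.pi * Complex.Gamma (-a) * Complex.sin (Real.pi * a / 2))) := by
  have h_Gamma_cont : ContinuousAt Gamma (-a) :=
    (differentiableAt_Gamma _ fun m h => ha m (neg_inj.mp h)).continuousAt
  have h_first : Tendsto (fun s : ℂ => Gamma (1 - s - a)) (𝓝[≠] 1) (𝓝 (Gamma (-a))) := by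
    refine (h_Gamma_cont.tendsto.comp ?_).mono_left nhdsWithin_le_nhds
    simpa using (show Continuous fun s : ℂ => 1 - s - a by fun_prop).tendsto 1
  have h_pole_zero := tendsto_mul_of_residue_of_hasDerivAt tendsto_sub_one_mul_Gamma_one_sub
    (cos_pi_two_mul_add_div_two_add_cos_eq_zero a) (hasDerivAt_cos_pi_two_mul_add_div_two_add_cos a)
  convert h_first.mul h_pole_zero using 2
  · exact mul_assoc _ _ _
  · ring
end
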